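/- arXiv:0906.4868 — 4 statements merged into one kernel-verified Lean document; each statement's English description precedes it below -/
import Mathlib

section
/- Let p be a prime. Then p is not in the image of Z_p; that is, there is no natural number m such that the base-p expansion of m! ends with exactly p zeroes. -/
/-- `Z b n` is the number of trailing zeroes of the base-`b` expansion of `n!`,
i.e. the largest `k` such that `b ^ k ∣ n!`. -/
def Z (b n : ℕ) : ℕ := padicValNat b (Nat.factorial n)

/-!
By Legendre's formula `Z p m = ∑_{i ≥ 1} ⌊m / p^i⌋`. Below `p²` only the first term survives,
so `Z p m = ⌊m / p⌋ < p`; from `p²` on the first two terms already give `Z p m ≥ p + 1`.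
So `Z p` jumps from `p - 1` straight to `p + 1` at `m = p²`.
-/

open Finset Nat

variable {p : ℕ} [Fact p.Prime]

theorem sum_Ico_div_pow_le_padicValNat_factorial (m b : ℕ) :
    ∑ i ∈ Ico 1 b, m / p ^ i ≤ padicValNat p m ! := by
  rw [padicValNat_factorial (b := max b (log p m + 1)) (by omega)]
  exact sum_le_sum_of_subset (Ico_subset_Ico_right (le_max_left _ _))

theorem padicValNat_factorial_of_lt_sq {m : ℕ} (hm : m < p ^ 2) :
    padicValNat p m ! = m / p := by
  rw [padicValNat_factorial (b := 2) (log_lt_of_lt_pow' two_ne_zero hm)]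
  simp

theorem padicValNat_factorial_lt_of_lt_sq {m : ℕ} (hm : m < p ^ 2) : padicValNat p m ! < p := by
  rw [padicValNat_factorial_of_lt_sq hm]
  exact Nat.div_lt_of_lt_mul (by rwa [← sq])

theorem lt_padicValNat_factorial_of_sq_le {m : ℕ} (hm : p ^ 2 ≤ m) : p < padicValNat p m ! := by
  have hp : 0 < p := (Fact.out : p.Prime).pos
  have h₁ : p ≤ m / p := (Nat.le_div_iff_mul_le hp).2 (by rwa [← sq])
  have h₂ : 1 ≤ m / p ^ 2 := (Nat.one_le_div_iff (by positivity)).2 hm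
  calc p < m / p ^ 1 + m / p ^ 2 := by rw [pow_one]; omega
    _ = ∑ i ∈ Ico 1 3, m / p ^ i := by simp [sum_Ico_succ_top]
    _ ≤ padicValNat p m ! := sum_Ico_div_pow_le_padicValNat_factorial m 3

theorem prime_not_mem_image_Z (p : ℕ) (hp : p.Prime) :
    ¬ ∃ m : ℕ, Z p m = p := by
  have : Fact p.Prime := ⟨hp⟩
  rintro ⟨m, hm⟩
  rcases lt_or_ge m (p ^ 2) with h | h
  · exact (padicValNat_factorial_lt_of_lt_sq h).ne hm
  · exact (lt_padicValNat_factorial_of_sq_le h).ne' hm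
end

section
/- Let p be a prime and let n > 1 and k be integers with 1 ≤ k < n. Then (p^n - kp + k - 1)/(p-1) is not in the image of Z_p. (Equivalently, (p^n - 1)/(p-1) - k is not in the image of Z_p.) -/
section

variable {p : ℕ} [Fact p.Prime]

theorem Z_succ (m : ℕ) : Z p (m + 1) = Z p m + padicValNat p (m + 1) := by
  rw [Z, Z, Nat.factorial_succ, padicValNat.mul (p := p) m.succ_ne_zero m.factorial_ne_zero,
    add_comm]

theorem Z_monotone : Monotone (Z p) :=
  monotone_nat_of_le_succ fun m => (Z_succ (p := p) m).symm ▸ Nat.le_add_right _ _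

theorem Z_prime_pow (n : ℕ) : Z p (p ^ n) = ∑ i ∈ Finset.range n, p ^ i := by
  induction n with
  | zero => simp [Z]
  | succ n ih => rw [Finset.sum_range_succ, ← ih, Z, Z, pow_succ', padicValNat_factorial_mul]

theorem Z_prime_pow_sub_one_add_one (n : ℕ) : Z p (p ^ n - 1 + 1) = Z p (p ^ n - 1) + n := by
  rw [Z_succ, Nat.sub_add_cancel (Nat.one_le_pow _ _ (Fact.out : p.Prime).pos),
    padicValNat.prime_pow]

end

theorem family_a_not_in_image_general (p n k : ℕ) (hp : p.Prime)
    (hk1 : 1 ≤ k) (hkn : k < n) :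
    (p ^ n - 1) / (p - 1) - k ∉ Set.range (Z p) := by
  have := Fact.mk hp
  have hT : (p ^ n - 1) / (p - 1) = Z p (p ^ n - 1) + n := by
    rw [← Nat.geomSum_eq hp.two_le, ← Z_prime_pow, ← Z_prime_pow_sub_one_add_one,
      Nat.sub_add_cancel (Nat.one_le_pow _ _ hp.pos)]
  rintro ⟨m, hm⟩
  refine (Z_monotone (p := p)).ne_of_lt_of_lt_nat (p ^ n - 1) ?_ ?_ m hm
  · omega
  · rw [Z_prime_pow_sub_one_add_one]
    omega

theorem family_a_not_in_image (p n k : ℕ) (hp : p.Prime) (hn : 1 < n)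
    (hk1 : 1 ≤ k) (hkn : k < n) :
    (p ^ n - 1) / (p - 1) - k ∉ Set.range (Z p) :=
  family_a_not_in_image_general p n k hp hk1 hkn
end

section
/- Let p be a prime and r ≥ 2 an integer such that r divides S := Σ_{i=1}^{kr} p^{kr-i} = (p^{kr} - 1)/(p - 1) for some integer k > 1. Then for every integer h with 1 ≤ h < k, the number S/r - h is not in the image of Z_{p^r}. -/
open Nat

section

variable {p : ℕ} [Fact p.Prime]

lemma padicValNat_prime_pow_base {r : ℕ} (hr : 0 < r) (n : ℕ) :
    padicValNat (p ^ r) n = padicValNat p n / r := by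
  rcases eq_or_ne n 0 with rfl | hn
  · simp
  have hpr : p ^ r ≠ 1 := (Nat.one_lt_pow hr.ne' (Fact.out : p.Prime).one_lt).ne'
  refine eq_of_forall_le_iff fun j => ?_
  rw [← padicValNat_dvd_iff_le_of_ne_one hpr hn, ← pow_mul, padicValNat_dvd_iff_le hn,
    Nat.le_div_iff_mul_le hr, mul_comm]

lemma Z_prime_pow_s15 {r : ℕ} (hr : 0 < r) (n : ℕ) : Z (p ^ r) n = padicValNat p n ! / r :=
  padicValNat_prime_pow_base hr _

lemma monotone_padicValNat_factorial : Monotone fun n => padicValNat p n ! := fun _ b hab =>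
  (padicValNat_dvd_iff_le (factorial_ne_zero b)).1
    (pow_padicValNat_dvd.trans (factorial_dvd_factorial hab))

lemma padicValNat_factorial_prime_pow (M : ℕ) :
    padicValNat p (p ^ M)! = (p ^ M - 1) / (p - 1) := by
  have hp : 1 < p := (Fact.out : p.Prime).one_lt
  have hdigits : (p.digits (p ^ M)).sum = 1 := by
    simpa [Nat.digits_of_lt p 1 one_ne_zero hp] using
      congrArg List.sum (digits_base_pow_mul (k := M) hp one_pos)
  refine (Nat.div_eq_of_eq_mul_left (by omega) ?_).symm
  rw [mul_comm, sub_one_mul_padicValNat_factorial, hdigits]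

lemma padicValNat_factorial_prime_pow_sub_one_add (M : ℕ) :
    padicValNat p (p ^ M - 1)! + M = padicValNat p (p ^ M)! := by
  have hpos : 0 < p ^ M := pow_pos (Fact.out : p.Prime).pos M
  conv_rhs => rw [← Nat.sub_add_cancel hpos, factorial_succ, Nat.sub_add_cancel hpos]
  rw [padicValNat.mul hpos.ne' (factorial_ne_zero _), padicValNat.prime_pow, add_comm]

lemma padicValNat_factorial_add_le_or_le (M n : ℕ) :
    padicValNat p n ! + M ≤ padicValNat p (p ^ M)! ∨
      padicValNat p (p ^ M)! ≤ padicValNat p n ! := by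
  rcases lt_or_ge n (p ^ M) with hn | hn
  · left
    rw [← padicValNat_factorial_prime_pow_sub_one_add]
    gcongr
    exact monotone_padicValNat_factorial (by omega)
  · exact .inr (monotone_padicValNat_factorial hn)

lemma Z_prime_pow_add_le_or_le {r : ℕ} (hr : 0 < r) (k n : ℕ) :
    Z (p ^ r) n + k ≤ (p ^ (k * r) - 1) / (p - 1) / r ∨
      (p ^ (k * r) - 1) / (p - 1) / r ≤ Z (p ^ r) n := by
  rw [Z_prime_pow_s15 hr, ← padicValNat_factorial_prime_pow, ← Nat.add_mul_div_right _ _ hr]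
  exact (padicValNat_factorial_add_le_or_le (k * r) n).imp
    (Nat.div_le_div_right ·) (Nat.div_le_div_right ·)

lemma le_prime_pow_sub_one_div_sub_one (M : ℕ) : M ≤ (p ^ M - 1) / (p - 1) := by
  rw [← padicValNat_factorial_prime_pow, ← padicValNat_factorial_prime_pow_sub_one_add]
  exact le_add_self

end

theorem family_not_in_image_prime_pow_general (p r k h : ℕ) (hp : p.Prime) (hr : 2 ≤ r)
    (hh1 : 1 ≤ h) (hhk : h < k) :
    ((p ^ (k * r) - 1) / (p - 1)) / r - h ∉ Set.range (Z (p ^ r)) := by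
  have := Fact.mk hp
  have hr0 : 0 < r := by omega
  rintro ⟨n, hn⟩
  have hk : k ≤ (p ^ (k * r) - 1) / (p - 1) / r :=
    (Nat.le_div_iff_mul_le hr0).2 (le_prime_pow_sub_one_div_sub_one (k * r))
  rcases Z_prime_pow_add_le_or_le (p := p) hr0 k n with hle | hle <;> omega

theorem family_not_in_image_prime_pow (p r k h : ℕ) (hp : p.Prime) (hr : 2 ≤ r)
    (hk : 1 < k) (hdvd : r ∣ (p ^ (k * r) - 1) / (p - 1))
    (hh1 : 1 ≤ h) (hhk : h < k) :
    ((p ^ (k * r) - 1) / (p - 1)) / r - h ∉ Set.range (Z (p ^ r)) :=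
  family_not_in_image_prime_pow_general p r k h hp hr hh1 hhk
end

section
/- Let q be an odd prime. Then q divides 2^{q(q-1)} - 1, and for every integer h with 1 ≤ h < q - 1, the number (2^{q(q-1)} - 1)/q - h is not in the image of Z_{2^q}. -/
open Nat

theorem padicValNat_pow_base (p k a : ℕ) [hp : Fact p.Prime] :
    padicValNat (p ^ k) a = padicValNat p a / k := by
  rcases Nat.eq_zero_or_pos k with rfl | hk
  · simp
  rcases eq_or_ne a 0 with rfl | ha
  · simp
  have hpk : p ^ k ≠ 1 := (Nat.one_lt_pow hk.ne' hp.out.one_lt).ne'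
  refine eq_of_forall_le_iff fun j => ?_
  rw [← padicValNat_dvd_iff_le_of_ne_one hpk ha, ← pow_mul, padicValNat_dvd_iff_le ha,
    Nat.le_div_iff_mul_le hk, mul_comm]

theorem digits_sum_base_pow {b : ℕ} (hb : 1 < b) (k : ℕ) : (digits b (b ^ k)).sum = 1 := by
  simpa [digits_of_lt b 1 one_ne_zero hb] using
    congrArg List.sum (digits_base_pow_mul hb (k := k) one_pos)

theorem digits_sum_base_pow_sub_one {b : ℕ} (hb : 1 < b) (k : ℕ) :
    (digits b (b ^ k - 1)).sum = k * (b - 1) := by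
  induction k with
  | zero => simp
  | succ k ih =>
    have hbk : 1 ≤ b ^ k := one_le_pow _ _ (by omega)
    have hsplit : b ^ (k + 1) - 1 = (b - 1) + b * (b ^ k - 1) := by
      have : 1 ≤ b ^ (k + 1) := one_le_pow _ _ (by omega)
      zify [hbk, this, hb.le]
      ring
    have hmod : (b ^ (k + 1) - 1) % b = b - 1 := by
      rw [hsplit, Nat.add_mul_mod_self_left, Nat.mod_eq_of_lt (by omega)]
    have hdiv : (b ^ (k + 1) - 1) / b = b ^ k - 1 := by
      rw [hsplit, Nat.add_mul_div_left _ _ (by omega), Nat.div_eq_of_lt (by omega), zero_add]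
    rw [digits_def' hb (by omega), hmod, hdiv, List.sum_cons, ih, succ_mul, add_comm]

theorem padicValNat_two_factorial (n : ℕ) : padicValNat 2 n ! = n - (digits 2 n).sum := by
  simpa using sub_one_mul_padicValNat_factorial (p := 2) n

theorem padicValNat_factorial_mono (p : ℕ) [Fact p.Prime] : Monotone fun n => padicValNat p n ! :=
  fun _ n hmn => (padicValNat_dvd_iff_le (factorial_ne_zero n)).mp
    (pow_padicValNat_dvd.trans (factorial_dvd_factorial hmn))

theorem padicValNat_two_factorial_notMem_Ioo (k n : ℕ) :
    padicValNat 2 n ! ∉ Set.Ioo (2 ^ k - 1 - k) (2 ^ k - 1) := by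
  rintro ⟨hlo, hhi⟩
  rcases lt_or_ge n (2 ^ k) with hn | hn
  · have := padicValNat_factorial_mono 2 (show n ≤ 2 ^ k - 1 by omega)
    simp only [padicValNat_two_factorial (2 ^ k - 1),
      digits_sum_base_pow_sub_one one_lt_two] at this
    omega
  · have := padicValNat_factorial_mono 2 hn
    simp only [padicValNat_two_factorial (2 ^ k), digits_sum_base_pow one_lt_two] at this
    omega

theorem sub_notMem_range_Z_two_pow {q k h : ℕ} (hdvd : q ∣ 2 ^ k - 1) (hh : 1 ≤ h)
    (hqh : q * h < k) : (2 ^ k - 1) / q - h ∉ Set.range (Z (2 ^ q)) := by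
  rintro ⟨n, hn⟩
  obtain ⟨N, hN⟩ := hdvd
  have hk : k < 2 ^ k := Nat.lt_two_pow_self
  have hq : 0 < q := Nat.pos_of_ne_zero (by rintro rfl; omega)
  rw [Z, padicValNat_pow_base, hN, Nat.mul_div_cancel_left _ hq] at hn
  have hlo := Nat.mul_div_le (padicValNat 2 n !) q
  have hhi := Nat.lt_mul_div_succ (padicValNat 2 n !) hq
  rw [hn] at hlo hhi
  have hhN : h ≤ N := Nat.le_of_mul_le_mul_left (by omega : q * h ≤ q * N) hq
  have hsplit : q * (N - h) + q * h = q * N := by rw [← Nat.mul_add, Nat.sub_add_cancel hhN]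
  have hqN : q * (N - h + 1) ≤ q * N := Nat.mul_le_mul_left q (by omega)
  exact padicValNat_two_factorial_notMem_Ioo k n ⟨by omega, by omega⟩

theorem family_not_in_image_two_pow (q : ℕ) (hq : q.Prime) (hodd : Odd q) :
    q ∣ 2 ^ (q * (q - 1)) - 1 ∧
    ∀ h : ℕ, 1 ≤ h → h < q - 1 →
      (2 ^ (q * (q - 1)) - 1) / q - h ∉ Set.range (Z (2 ^ q)) := by
  have hcop : Coprime 2 q := coprime_two_left.2 hodd
  have hdvd : q ∣ 2 ^ (q * (q - 1)) - 1 := by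
    have hfermat := (ModEq.pow_card_sub_one_eq_one hq hcop).pow q
    rw [one_pow, ← pow_mul, mul_comm] at hfermat
    exact (modEq_iff_dvd' Nat.one_le_two_pow).1 hfermat.symm
  exact ⟨hdvd, fun h hh hhq => sub_notMem_range_Z_two_pow hdvd hh
    (Nat.mul_lt_mul_of_pos_left hhq hq.pos)⟩
end
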